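/- arXiv:2012.12538 — 2 statements merged into one kernel-verified Lean document; each statement's English description precedes it below -/
import Mathlib

section
/- Let X be a Banach space for which the duality map is uniformly quasicontinuous: for every ε > 0 there exists δ > 0 such that for any f ∈ S(X*) there exists x ∈ S(X) with D(S(X) ∩ B(x, δ)) ⊆ B(f, ε). Then for every ε > 0 there exists δ > 0 such that for every f ∈ S(X*) there exists x ∈ S(X) with d₁(x, δ) < ε (i.e., x ∈ M_{ε,δ}(X)) and D(x) ⊆ B(f, ε). -/
/-!
If every norming functional of every unit vector `2δ`-close to `x` lies within `ε` of `f`, pick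
norming functionals `g₁`, `g₂` of `x + λy` and `x - λy`. Then
`‖x + λy‖ + ‖x - λy‖ = g₁ x + g₂ x + λ (g₁ - g₂) y ≤ 2 + λ ‖g₁ - g₂‖ ≤ 2 + 2ελ`,
i.e. `d₁(x, δ) ≤ diam D(S(X) ∩ B(x, 2δ)) ≤ 2ε`. Applying the hypothesis with `ε / 3` gives the claim.
-/

open Metric

section

variable {X : Type*} [NormedAddCommGroup X]

lemma ne_zero_of_norm_sub_lt_one {x w : X} (hx : ‖x‖ = 1) (hw : ‖w - x‖ < 1) : w ≠ 0 := by
  rintro rfl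
  rw [zero_sub, norm_neg, hx] at hw
  exact lt_irrefl _ hw

variable [NormedSpace ℝ X]

/-- `D(S(X) ∩ B(x, δ))`: the norming functionals of the unit vectors `δ`-close to `x`. -/
def dualImageBall (x : X) (δ : ℝ) : Set (StrongDual ℝ X) :=
  {g | ‖g‖ = 1 ∧ ∃ z : X, ‖z‖ = 1 ∧ ‖z - x‖ < δ ∧ g z = 1}

/-- The quantity `d₁(x, δ)`. -/
noncomputable def localRoughness (x : X) (δ : ℝ) : ℝ :=
  sSup {r : ℝ | ∃ lam : ℝ, ∃ y : X, 0 < lam ∧ lam < δ ∧ ‖y‖ ≤ 1 ∧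
    r = (‖x + lam • y‖ + ‖x - lam • y‖ - 2) / lam}

lemma norm_inv_norm_smul_sub_self {w : X} (hw : w ≠ 0) : ‖‖w‖⁻¹ • w - w‖ = |1 - ‖w‖| := by
  have hw' : ‖w‖ ≠ 0 := norm_ne_zero_iff.mpr hw
  calc ‖‖w‖⁻¹ • w - w‖ = ‖(‖w‖⁻¹ - 1) • w‖ := by rw [sub_smul, one_smul]
    _ = |‖w‖⁻¹ - 1| * ‖w‖ := by
        rw [norm_smul, Real.norm_eq_abs]
    _ = |1 - ‖w‖| := by
        rw [← abs_norm w, ← abs_mul, abs_norm, sub_mul, inv_mul_cancel₀ hw', one_mul]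

lemma norm_inv_norm_smul_sub_le {x : X} (hx : ‖x‖ = 1) (w : X) :
    ‖‖w‖⁻¹ • w - x‖ ≤ 2 * ‖w - x‖ := by
  rcases eq_or_ne w 0 with rfl | hw
  · simp [hx]
  have hnorm : |1 - ‖w‖| ≤ ‖w - x‖ := by
    simpa [hx, norm_sub_rev x w] using abs_norm_sub_norm_le x w
  calc ‖‖w‖⁻¹ • w - x‖ ≤ ‖‖w‖⁻¹ • w - w‖ + ‖w - x‖ := norm_sub_le_norm_sub_add_norm_sub _ _ _
    _ ≤ 2 * ‖w - x‖ := by rw [norm_inv_norm_smul_sub_self hw]; linarith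

lemma mem_dualImageBall_of_apply_eq_norm {x w : X} {g : StrongDual ℝ X} {δ : ℝ}
    (hx : ‖x‖ = 1) (hw : ‖w - x‖ < 1) (hδ : 2 * ‖w - x‖ < δ) (hg : ‖g‖ = 1)
    (hgw : g w = ‖w‖) : g ∈ dualImageBall x δ := by
  have hw₀ : ‖w‖ ≠ 0 := norm_ne_zero_iff.mpr (ne_zero_of_norm_sub_lt_one hx hw)
  refine ⟨hg, ‖w‖⁻¹ • w, ?_, (norm_inv_norm_smul_sub_le hx w).trans_lt hδ, ?_⟩
  · rw [norm_smul, norm_inv, norm_norm, inv_mul_cancel₀ hw₀]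
  · rw [map_smul, smul_eq_mul, hgw, inv_mul_cancel₀ hw₀]

lemma norm_add_add_norm_sub_le_of_apply_eq_norm (x v : X) {g₁ g₂ : StrongDual ℝ X}
    (hg₁ : ‖g₁‖ ≤ 1) (hg₂ : ‖g₂‖ ≤ 1) (hg₁v : g₁ (x + v) = ‖x + v‖)
    (hg₂v : g₂ (x - v) = ‖x - v‖) :
    ‖x + v‖ + ‖x - v‖ ≤ 2 * ‖x‖ + ‖g₁ - g₂‖ * ‖v‖ := by
  have h₁ : g₁ x ≤ ‖x‖ :=
    (le_abs_self _).trans ((g₁.le_opNorm x).trans (mul_le_of_le_one_left (norm_nonneg x) hg₁))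
  have h₂ : g₂ x ≤ ‖x‖ :=
    (le_abs_self _).trans ((g₂.le_opNorm x).trans (mul_le_of_le_one_left (norm_nonneg x) hg₂))
  have h₃ : (g₁ - g₂) v ≤ ‖g₁ - g₂‖ * ‖v‖ := (le_abs_self _).trans ((g₁ - g₂).le_opNorm v)
  rw [← hg₁v, ← hg₂v, map_add, map_sub]
  rw [sub_apply] at h₃
  linarith

lemma norm_add_add_norm_sub_sub_two_le {x v : X} {f : StrongDual ℝ X} {δ r : ℝ}
    (hx : ‖x‖ = 1) (hD : dualImageBall x δ ⊆ ball f r) (hv : ‖v‖ < 1) (hvδ : 2 * ‖v‖ < δ) :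
    ‖x + v‖ + ‖x - v‖ - 2 ≤ 2 * r * ‖v‖ := by
  have hmem : ∀ w : X, ‖w - x‖ = ‖v‖ → ∃ g : StrongDual ℝ X,
      ‖g‖ = 1 ∧ g w = ‖w‖ ∧ dist g f < r := by
    intro w hwx
    have hw : ‖w‖ ≠ 0 := norm_ne_zero_iff.mpr (ne_zero_of_norm_sub_lt_one hx (hwx ▸ hv))
    obtain ⟨g, hg, hgw⟩ := exists_dual_vector ℝ w hw
    exact ⟨g, hg, hgw, hD (mem_dualImageBall_of_apply_eq_norm hx (hwx ▸ hv) (hwx ▸ hvδ) hg hgw)⟩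
  have hplus : ‖x + v - x‖ = ‖v‖ := by rw [add_sub_cancel_left]
  have hminus : ‖x - v - x‖ = ‖v‖ := by rw [sub_sub_cancel_left, norm_neg]
  obtain ⟨g₁, hg₁, hg₁v, hg₁f⟩ := hmem _ hplus
  obtain ⟨g₂, hg₂, hg₂v, hg₂f⟩ := hmem _ hminus
  have hdiam : ‖g₁ - g₂‖ ≤ 2 * r := by
    rw [← dist_eq_norm]
    linarith [dist_triangle_right g₁ g₂ f]
  have hsum := norm_add_add_norm_sub_le_of_apply_eq_norm x v hg₁.le hg₂.le hg₁v hg₂v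
  rw [hx] at hsum
  nlinarith [norm_nonneg v]

/-- The cap `1 / 2` keeps `x ± λy` away from `0`, so that they can be normalized. -/
lemma localRoughness_le {x : X} {f : StrongDual ℝ X} {δ r : ℝ} (hx : ‖x‖ = 1) (hr : 0 ≤ r)
    (hD : dualImageBall x δ ⊆ ball f r) : localRoughness x (min (δ / 2) (1 / 2)) ≤ 2 * r := by
  refine Real.sSup_le ?_ (by positivity)
  rintro _ ⟨l, y, hl, hlδ, hy, rfl⟩
  have hly : ‖l • y‖ ≤ l := by
    rw [norm_smul, Real.norm_of_nonneg hl.le]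
    exact mul_le_of_le_one_right hl.le hy
  have hl₁ : l < δ / 2 := hlδ.trans_le (min_le_left _ _)
  have hl₂ : l < 1 / 2 := hlδ.trans_le (min_le_right _ _)
  rw [div_le_iff₀ hl]
  calc ‖x + l • y‖ + ‖x - l • y‖ - 2 ≤ 2 * r * ‖l • y‖ :=
        norm_add_add_norm_sub_sub_two_le hx hD (by linarith) (by linarith)
    _ ≤ 2 * r * l := by gcongr

end

theorem stmt_12_general {X : Type*} [NormedAddCommGroup X] [NormedSpace ℝ X]
    (h : ∀ ε : ℝ, 0 < ε → ∃ δ : ℝ, 0 < δ ∧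
      ∀ f : StrongDual ℝ X, ‖f‖ = 1 → ∃ x : X, ‖x‖ = 1 ∧
        {g : StrongDual ℝ X | ‖g‖ = 1 ∧ ∃ z : X, ‖z‖ = 1 ∧ ‖z - x‖ < δ ∧ g z = 1} ⊆
          Metric.ball f ε) :
    ∀ ε : ℝ, 0 < ε → ∃ δ : ℝ, 0 < δ ∧
      ∀ f : StrongDual ℝ X, ‖f‖ = 1 → ∃ x : X, ‖x‖ = 1 ∧
        sSup {r : ℝ | ∃ lam : ℝ, ∃ y : X, 0 < lam ∧ lam < δ ∧ ‖y‖ ≤ 1 ∧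
          r = (‖x + lam • y‖ + ‖x - lam • y‖ - 2) / lam} < ε ∧
        {g : StrongDual ℝ X | ‖g‖ = 1 ∧ g x = 1} ⊆ Metric.ball f ε := by
  intro ε hε
  obtain ⟨δ, hδ, H⟩ := h (ε / 3) (by positivity)
  refine ⟨min (δ / 2) (1 / 2), by positivity, fun f hf => ?_⟩
  obtain ⟨x, hx, hD⟩ := H f hf
  refine ⟨x, hx, ?_, fun g hg => ?_⟩
  · calc localRoughness x (min (δ / 2) (1 / 2)) ≤ 2 * (ε / 3) :=
          localRoughness_le hx (by positivity) hD
      _ < ε := by linarith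
  · exact ball_subset_ball (by linarith) (hD ⟨hg.1, x, hx, by simpa using hδ, hg.2⟩)

/-- Uniform quasicontinuity of the duality map implies condition (e):
one can find `x ∈ M_{ε,δ}(X)` (i.e. `d₁(x, δ) < ε`) with `D(x) ⊆ B(f, ε)`. -/
theorem stmt_12 {X : Type*} [NormedAddCommGroup X] [NormedSpace ℝ X] [CompleteSpace X]
    (h : ∀ ε : ℝ, 0 < ε → ∃ δ : ℝ, 0 < δ ∧
      ∀ f : StrongDual ℝ X, ‖f‖ = 1 → ∃ x : X, ‖x‖ = 1 ∧
        {g : StrongDual ℝ X | ‖g‖ = 1 ∧ ∃ z : X, ‖z‖ = 1 ∧ ‖z - x‖ < δ ∧ g z = 1} ⊆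
          Metric.ball f ε) :
    ∀ ε : ℝ, 0 < ε → ∃ δ : ℝ, 0 < δ ∧
      ∀ f : StrongDual ℝ X, ‖f‖ = 1 → ∃ x : X, ‖x‖ = 1 ∧
        sSup {r : ℝ | ∃ lam : ℝ, ∃ y : X, 0 < lam ∧ lam < δ ∧ ‖y‖ ≤ 1 ∧
          r = (‖x + lam • y‖ + ‖x - lam • y‖ - 2) / lam} < ε ∧
        {g : StrongDual ℝ X | ‖g‖ = 1 ∧ g x = 1} ⊆ Metric.ball f ε :=
  stmt_12_general h
end

section
/- Let X be a real Banach space such that for every ε > 0 there exists δ > 0 such that for any x ∈ S(X) there exists g ∈ S(X*) with S(B(X), g, 2δ) ⊆ B(x, ε). Then for every ε > 0 there exists δ > 0 such that for any x ∈ S(X) there exists a norm-attaining f ∈ D(S(X)) with S(B(X), f, δ) ⊆ B(x, ε); consequently D⁻¹(D(S(X)) ∩ B(f, δ)) ⊆ B(x, ε). -/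
/-!
By the Bishop–Phelps theorem the functional `g` given by the hypothesis can be replaced by a
norm-attaining `f` with `‖f - g‖ < δ`. The slice of `f` of width `δ` then lies in the slice of
`g` of width `2δ`, and a point of the sphere at which some functional `δ`-close to `f` attains
its norm lies in that slice of `f`.

For Bishop–Phelps, Ekeland's principle gives a point `v` of the unit ball with
`g b - g v ≤ η ‖b - v‖` on the ball, i.e. `v + K` misses the ball, where `K` is the open convex
cone `{x | η ‖x‖ < g x}`. A functional separating `K` from `B - v` attains its norm at `v` and is
positive on `K`, so on its kernel `|g| ≤ η ‖·‖`; after normalisation it is `3η`-close to `g`.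
-/

open Filter Topology Metric

section Ekeland

variable {M : Type*} [MetricSpace M] {f : M → ℝ}

lemma dist_le_sub_trans {a b c : M} (hab : dist b a ≤ f b - f a) (hbc : dist c b ≤ f c - f b) :
    dist c a ≤ f c - f a := by
  linarith [dist_triangle c b a]

lemma exists_dist_le_sub_and_forall_dist_le (hf : BddAbove (Set.range f)) (a : M) {ε : ℝ}
    (hε : 0 < ε) :
    ∃ a', dist a' a ≤ f a' - f a ∧ ∀ b, dist b a' ≤ f b - f a' → dist b a' ≤ ε := by
  set S := {b | dist b a ≤ f b - f a}
  have hS : (f '' S).Nonempty := ⟨f a, a, by simp [S], rfl⟩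
  obtain ⟨_, ⟨a', ha', rfl⟩, ha'_sup⟩ := exists_lt_of_lt_csSup hS (sub_lt_self _ hε)
  refine ⟨a', ha', fun b hb => ?_⟩
  have : f b ≤ sSup (f '' S) :=
    le_csSup (hf.mono (Set.image_subset_range _ _)) ⟨b, dist_le_sub_trans ha' hb, rfl⟩
  linarith

/-- Ekeland's variational principle. The points are picked successively almost maximising `f`
on the shrinking sets `{b | dist b a ≤ f b - f a}`; their limit is maximal for that order. -/
theorem exists_le_and_forall_sub_le_dist [CompleteSpace M] (hf : Continuous f)
    (hbdd : BddAbove (Set.range f)) (x₀ : M) :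
    ∃ v, f x₀ ≤ f v ∧ ∀ b, f b - f v ≤ dist b v := by
  choose next hnext_le hnext_small using
    fun a (n : ℕ) => exists_dist_le_sub_and_forall_dist_le hbdd a (pow_pos one_half_pos n)
  let a : ℕ → M := fun n => Nat.rec (next x₀ 0) (fun n an => next an (n + 1)) n
  have hsmall : ∀ n b, dist b (a n) ≤ f b - f (a n) → dist b (a n) ≤ (1 / 2) ^ n := by
    rintro (_ | n) <;> exact hnext_small _ _
  have hchain : ∀ n m, n ≤ m → dist (a m) (a n) ≤ f (a m) - f (a n) := by
    intro n m hnm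
    induction m, hnm using Nat.le_induction with
    | base => simp
    | succ m _ ih => exact dist_le_sub_trans ih (hnext_le _ _)
  have hcauchy : CauchySeq a := cauchySeq_of_le_geometric (1 / 2) 1 (by norm_num) fun n => by
    rw [dist_comm, one_mul]
    exact hsmall n _ (hchain n (n + 1) n.le_succ)
  obtain ⟨v, hv⟩ := cauchySeq_tendsto_of_complete hcauchy
  have hvS : ∀ n, dist v (a n) ≤ f v - f (a n) := fun n =>
    (isClosed_le (continuous_id.dist continuous_const) (hf.sub continuous_const)).mem_of_tendsto
      hv (eventually_atTop.2 ⟨n, hchain n⟩)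
  refine ⟨v, ?_, fun b => not_lt.1 fun hb => ?_⟩
  · linarith [dist_nonneg (x := v) (y := x₀), dist_le_sub_trans (hnext_le x₀ 0) (hvS 0)]
  · have hab : Tendsto a atTop (𝓝 b) := by
      refine tendsto_iff_dist_tendsto_zero.2 (squeeze_zero (fun _ => dist_nonneg) (fun n => ?_)
        (tendsto_pow_atTop_nhds_zero_of_lt_one (by norm_num) (by norm_num : (1 / 2 : ℝ) < 1)))
      rw [dist_comm]
      exact hsmall n b (dist_le_sub_trans (hvS n) hb.le)
    rw [tendsto_nhds_unique hab hv, dist_self, sub_self] at hb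
    exact hb.false

end Ekeland
section BishopPhelps

variable {X : Type*} [NormedAddCommGroup X] [NormedSpace ℝ X]

def bishopPhelpsCone (g : StrongDual ℝ X) (η : ℝ) : Set X := {x | η * ‖x‖ < g x}

lemma isOpen_bishopPhelpsCone (g : StrongDual ℝ X) (η : ℝ) : IsOpen (bishopPhelpsCone g η) :=
  isOpen_lt (continuous_const.mul continuous_norm) g.continuous

lemma smul_mem_bishopPhelpsCone {g : StrongDual ℝ X} {η t : ℝ} {x : X} (ht : 0 < t)
    (hx : x ∈ bishopPhelpsCone g η) : t • x ∈ bishopPhelpsCone g η := by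
  simp only [bishopPhelpsCone, Set.mem_ofPred_eq, norm_smul, Real.norm_of_nonneg ht.le,
    map_smul, smul_eq_mul] at hx ⊢
  nlinarith

lemma convex_bishopPhelpsCone (g : StrongDual ℝ X) {η : ℝ} (hη : 0 ≤ η) :
    Convex ℝ (bishopPhelpsCone g η) := by
  intro x hx y hy a b ha hb hab
  simp only [bishopPhelpsCone, Set.mem_ofPred_eq, map_add, map_smul, smul_eq_mul] at hx hy ⊢
  rcases ha.eq_or_lt with rfl | ha
  · simp_all
  calc η * ‖a • x + b • y‖ ≤ a * (η * ‖x‖) + b * (η * ‖y‖) := by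
        nlinarith [norm_add_le (a • x) (b • y), norm_smul_of_nonneg ha.le x,
          norm_smul_of_nonneg hb y]
    _ < a * g x + b * g y := by
        linarith [mul_lt_mul_of_pos_left hx ha, mul_le_mul_of_nonneg_left hy.le hb]

lemma abs_apply_le_of_apply_eq_zero {g f : StrongDual ℝ X} {η : ℝ}
    (hf : ∀ x ∈ bishopPhelpsCone g η, 0 < f x) {y : X} (hy : f y = 0) : |g y| ≤ η * ‖y‖ := by
  refine abs_le.2 ⟨?_, not_lt.1 fun h => (hf y h).ne' hy⟩
  refine neg_le.1 (not_lt.1 fun h => (hf (-y) ?_).ne' (by simp [hy]))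
  simpa [bishopPhelpsCone] using h

lemma exists_pos_on_bishopPhelpsCone_of_forall_le {g : StrongDual ℝ X} {η : ℝ} (hη : 0 ≤ η)
    {v : X} (hv : ‖v‖ ≤ 1) (hmax : ∀ b : X, ‖b‖ ≤ 1 → g b - g v ≤ η * ‖b - v‖) :
    ∃ ψ : StrongDual ℝ X, (∀ x ∈ bishopPhelpsCone g η, 0 < ψ x) ∧
      ∀ b : X, ‖b‖ ≤ 1 → ψ b ≤ ψ v := by
  rcases (bishopPhelpsCone g η).eq_empty_or_nonempty with hK | ⟨k₀, hk₀⟩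
  · exact ⟨0, by simp [hK], by simp⟩
  have hdisj : Disjoint (bishopPhelpsCone g η) (closedBall (-v) 1) := by
    refine Set.disjoint_left.2 fun k hk hkB => ?_
    have := hmax (k + v) (by simpa [dist_eq_norm] using hkB)
    simp only [bishopPhelpsCone, Set.mem_ofPred_eq, map_add, add_sub_cancel_right] at hk this
    linarith
  obtain ⟨f, u, hfK, hfB⟩ := geometric_hahn_banach_open (convex_bishopPhelpsCone g hη)
    (isOpen_bishopPhelpsCone g η) (convex_closedBall _ _) hdisj
  have hu_le : u ≤ 0 := by simpa using hfB 0 (by simpa using hv)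
  -- `u` is also `≥ 0`, since the cone accumulates at `0`
  have hu_ge : 0 ≤ u := not_lt.1 fun hu => by
    have hfk₀ : f k₀ < 0 := (hfK k₀ hk₀).trans hu
    have := hfK _ (smul_mem_bishopPhelpsCone (div_pos_of_neg_of_neg hu hfk₀) hk₀)
    rw [map_smul, smul_eq_mul, div_mul_cancel₀ _ hfk₀.ne] at this
    exact this.false
  refine ⟨-f, fun x hx => ?_, fun b hb => ?_⟩
  · simpa using (hfK x hx).trans_le hu_le
  · have := hfB (b - v) (by simpa [dist_eq_norm] using hb)
    simp only [map_sub, neg_apply, neg_le_neg_iff] at this ⊢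
    linarith

lemma norm_eq_apply_of_forall_le {ψ : StrongDual ℝ X} {v : X} (hv : ‖v‖ ≤ 1)
    (hmax : ∀ b : X, ‖b‖ ≤ 1 → ψ b ≤ ψ v) : ‖ψ‖ = ψ v := by
  refine le_antisymm (ψ.opNorm_le_of_unit_norm ?_ fun x hx => ?_) ?_
  · simpa using hmax 0 (by simp)
  · rw [Real.norm_eq_abs, abs_le]
    have := hmax (-x) (by simp [hx])
    simp only [map_neg] at this
    exact ⟨by linarith, hmax x hx.le⟩
  · exact (le_abs_self _).trans ((ψ.le_opNorm v).trans (mul_le_of_le_one_right (norm_nonneg _) hv))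

lemma norm_sub_apply_smul_le {g f : StrongDual ℝ X} {η : ℝ} (hη : 0 ≤ η) (hf : ‖f‖ ≤ 1)
    (hfK : ∀ x ∈ bishopPhelpsCone g η, 0 < f x) {v : X} (hv : ‖v‖ ≤ 1) (hfv : f v = 1) :
    ‖g - g v • f‖ ≤ 2 * η := by
  refine (g - g v • f).opNorm_le_of_unit_norm (by positivity) fun x hx => ?_
  have hker : f (x - f x • v) = 0 := by simp [hfv]
  have hfx : |f x| ≤ 1 := by simpa using f.unit_le_opNorm x hx.le |>.trans hf
  have hnorm : ‖x - f x • v‖ ≤ 2 := by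
    calc ‖x - f x • v‖ ≤ ‖x‖ + |f x| * ‖v‖ := by
          simpa [norm_smul] using norm_sub_le x (f x • v)
      _ ≤ 2 := by nlinarith [abs_nonneg (f x), norm_nonneg v]
  calc ‖(g - g v • f) x‖ = |g (x - f x • v)| := by simp [mul_comm]
    _ ≤ η * ‖x - f x • v‖ := abs_apply_le_of_apply_eq_zero hfK hker
    _ ≤ 2 * η := by nlinarith

lemma exists_norm_le_one_lt_apply (g : StrongDual ℝ X) {r : ℝ} (hr : r < ‖g‖) :
    ∃ x : X, ‖x‖ ≤ 1 ∧ r < g x := by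
  obtain ⟨x, hx, hgx⟩ := g.exists_lt_apply_of_lt_opNorm hr
  rcases lt_abs.1 hgx with hgx | hgx
  · exact ⟨x, hx.le, hgx⟩
  · exact ⟨-x, by simpa using hx.le, by simpa using hgx⟩

lemma exists_forall_sub_le_mul_norm_sub [CompleteSpace X] (g : StrongDual ℝ X) {η : ℝ}
    (hη : 0 < η) {x₀ : X} (hx₀ : ‖x₀‖ ≤ 1) :
    ∃ v : X, ‖v‖ ≤ 1 ∧ g x₀ ≤ g v ∧ ∀ b : X, ‖b‖ ≤ 1 → g b - g v ≤ η * ‖b - v‖ := by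
  have : CompleteSpace (closedBall (0 : X) 1) := isClosed_closedBall.completeSpace_coe
  obtain ⟨⟨v, hv⟩, hx₀v, hmax⟩ := exists_le_and_forall_sub_le_dist
    (f := fun b : closedBall (0 : X) 1 => g b / η)
    ((g.continuous.comp continuous_subtype_val).div_const η)
    ⟨‖g‖ / η, by
      rintro _ ⟨⟨b, hb⟩, rfl⟩
      exact div_le_div_of_nonneg_right ((le_abs_self _).trans (g.unit_le_opNorm b
        (by simpa using hb))) hη.le⟩
    ⟨x₀, by simpa using hx₀⟩
  refine ⟨v, by simpa using hv, (div_le_div_iff_of_pos_right hη).1 hx₀v, fun b hb => ?_⟩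
  have := hmax ⟨b, by simpa using hb⟩
  rw [← sub_div, div_le_iff₀ hη] at this
  change g b - g v ≤ dist b v * η at this
  rw [dist_eq_norm] at this
  linarith

/-- The Bishop–Phelps theorem. -/
theorem exists_norm_attaining_norm_sub_lt [CompleteSpace X] (g : StrongDual ℝ X) (hg : ‖g‖ = 1)
    {θ : ℝ} (hθ : 0 < θ) :
    ∃ f : StrongDual ℝ X, ‖f‖ = 1 ∧ (∃ v : X, ‖v‖ = 1 ∧ f v = 1) ∧ ‖f - g‖ < θ := by
  obtain ⟨η, hη, hηθ, hη1⟩ : ∃ η : ℝ, 0 < η ∧ 3 * η ≤ θ ∧ 3 * η ≤ 1 :=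
    ⟨min θ 1 / 3, by positivity, by linarith [min_le_left θ 1], by linarith [min_le_right θ 1]⟩
  obtain ⟨x₀, hx₀, hgx₀⟩ := exists_norm_le_one_lt_apply g (r := 1 - η) (by linarith)
  obtain ⟨v, hv, hgv, hmax⟩ := exists_forall_sub_le_mul_norm_sub g hη hx₀
  have hvK : v ∈ bishopPhelpsCone g η := by
    change η * ‖v‖ < g v
    nlinarith
  obtain ⟨ψ, hψK, hψmax⟩ := exists_pos_on_bishopPhelpsCone_of_forall_le hη.le hv hmax
  have hψv : 0 < ψ v := hψK v hvK
  have hψ : ‖ψ‖ = ψ v := norm_eq_apply_of_forall_le hv hψmax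
  set f := (ψ v)⁻¹ • ψ
  have hf : ‖f‖ = 1 := by rw [norm_smul, hψ, Real.norm_of_nonneg (by positivity),
    inv_mul_cancel₀ hψv.ne']
  have hfv : f v = 1 := inv_mul_cancel₀ hψv.ne'
  have hfK : ∀ x ∈ bishopPhelpsCone g η, 0 < f x := fun x hx =>
    mul_pos (inv_pos.2 hψv) (hψK x hx)
  have hv1 : ‖v‖ = 1 := le_antisymm hv (by
    simpa [hf, hfv] using (le_abs_self _).trans (f.le_opNorm v))
  have hgv1 : g v ≤ 1 := (le_abs_self _).trans (by simpa [hg, hv1] using g.le_opNorm v)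
  refine ⟨f, hf, ⟨v, hv1, hfv⟩, ?_⟩
  calc ‖f - g‖ = ‖(1 - g v) • f - (g - g v • f)‖ := by congr 1; module
    _ ≤ (1 - g v) + 2 * η := by
      refine (norm_sub_le _ _).trans (add_le_add ?_ (norm_sub_apply_smul_le hη.le hf.le hfK hv hfv))
      rw [norm_smul, hf, mul_one, Real.norm_of_nonneg (by linarith)]
    _ < θ := by linarith

lemma apply_le_apply_add_norm_sub (f g : StrongDual ℝ X) {y : X} (hy : ‖y‖ ≤ 1) :
    g y ≤ f y + ‖g - f‖ := by
  have := (le_abs_self _).trans ((g - f).unit_le_opNorm y hy)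
  simp only [sub_apply] at this
  linarith

end BishopPhelps

/-- From slices determined by arbitrary norm-one functionals one can pass to slices
determined by norm-attaining functionals. -/
theorem stmt_16 {X : Type*} [NormedAddCommGroup X] [NormedSpace ℝ X] [CompleteSpace X]
    (h : ∀ ε : ℝ, 0 < ε → ∃ δ : ℝ, 0 < δ ∧
      ∀ x : X, ‖x‖ = 1 → ∃ g : StrongDual ℝ X, ‖g‖ = 1 ∧
        {y : X | ‖y‖ ≤ 1 ∧ 1 - 2 * δ < g y} ⊆ Metric.ball x ε) :
    ∀ ε : ℝ, 0 < ε → ∃ δ : ℝ, 0 < δ ∧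
      ∀ x : X, ‖x‖ = 1 → ∃ f : StrongDual ℝ X, ‖f‖ = 1 ∧ (∃ y : X, ‖y‖ = 1 ∧ f y = 1) ∧
        {y : X | ‖y‖ ≤ 1 ∧ 1 - δ < f y} ⊆ Metric.ball x ε ∧
        {y : X | ‖y‖ = 1 ∧ ∃ g : StrongDual ℝ X, ‖g‖ = 1 ∧ g y = 1 ∧ ‖g - f‖ < δ} ⊆
          Metric.ball x ε := by
  intro ε hε
  obtain ⟨δ, hδ, H⟩ := h ε hε
  refine ⟨δ, hδ, fun x hx => ?_⟩
  obtain ⟨g, hg, hslice⟩ := H x hx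
  obtain ⟨f, hf, hattains, hfg⟩ := exists_norm_attaining_norm_sub_lt g hg hδ
  have hsub : {y : X | ‖y‖ ≤ 1 ∧ 1 - δ < f y} ⊆ Metric.ball x ε := fun y ⟨hy, hfy⟩ =>
    hslice ⟨hy, by linarith [apply_le_apply_add_norm_sub g f hy]⟩
  refine ⟨f, hf, hattains, hsub, ?_⟩
  rintro y ⟨hy, g', -, hg'y, hg'f⟩
  exact hsub ⟨hy.le, by linarith [apply_le_apply_add_norm_sub f g' hy.le]⟩
end
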